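/- Let G be a connected chordal graph that is not complete and let C be a maximal clique of G. Then C is a boundary clique if and only if the subgraph of G induced by the union of the remaining maximal cliques is a chordal graph whose set of maximal cliques is exactly C(G) \ {C}. -/

import Mathlib

namespace Chordal

variable {V : Type*} [Fintype V]

/-- A closed walk has a chord: an edge of `G` joining two support vertices that is
not an edge of the walk. -/
def HasChord (G : SimpleGraph V) {u : V} (c : G.Walk u u) : Prop :=
  ∃ v w, v ∈ c.support ∧ w ∈ c.support ∧ G.Adj v w ∧ s(v, w) ∉ c.edges

/-- A graph is chordal if every cycle of length at least 4 has a chord. -/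
def IsChordal (G : SimpleGraph V) : Prop :=
  ∀ ⦃u : V⦄ (c : G.Walk u u), c.IsCycle → 4 ≤ c.length → HasChord G c

/-- A maximal clique of `G`. -/
def IsMaxClique (G : SimpleGraph V) (s : Set V) : Prop :=
  G.IsClique s ∧ ∀ t : Set V, G.IsClique t → s ⊆ t → s = t

/-- A maximal clique of the induced subgraph `G(W)`. -/
def IsMaxCliqueOn (G : SimpleGraph V) (W s : Set V) : Prop :=
  s ⊆ W ∧ G.IsClique s ∧ ∀ t : Set V, t ⊆ W → G.IsClique t → s ⊆ t → s = t

/-- There is a walk from `u` to `w` staying inside `W` and avoiding `S`. -/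
def ReachWithin (G : SimpleGraph V) (W S : Set V) (u w : V) : Prop :=
  ∃ p : G.Walk u w, ∀ x ∈ p.support, x ∈ W ∧ x ∉ S

/-- `S` separates `u` from `w` in the induced subgraph `G(W)`. -/
def SeparatesOn (G : SimpleGraph V) (W S : Set V) (u w : V) : Prop :=
  u ∈ W ∧ w ∈ W ∧ u ∉ S ∧ w ∉ S ∧ u ≠ w ∧ ¬ ReachWithin G W S u w

/-- `S` is a minimal vertex separator of the induced subgraph `G(W)`:
for some pair `u, w` it is an inclusion-minimal set separating `u` from `w`. -/
def IsMinSeparatorOn (G : SimpleGraph V) (W S : Set V) : Prop :=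
  S ⊆ W ∧ ∃ u w, SeparatesOn G W S u w ∧ ∀ S' ⊂ S, ¬ SeparatesOn G W S' u w

/-- `S` is a minimal vertex separator of `G`. -/
def IsMinSeparator (G : SimpleGraph V) (S : Set V) : Prop :=
  IsMinSeparatorOn G Set.univ S

/-- `S` is inclusion-minimal among the minimal vertex separators of `G`. -/
def IsInclMinSeparator (G : SimpleGraph V) (S : Set V) : Prop :=
  IsMinSeparator G S ∧ ∀ S' : Set V, IsMinSeparator G S' → S' ⊆ S → S' = S

/-- `Γ` is a connected component of `G(V \ S)`. -/
def IsCompOutside (G : SimpleGraph V) (S Γ : Set V) : Prop :=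
  ∃ u, u ∉ S ∧ Γ = {w | ReachWithin G Set.univ S u w}

/-- A vertex is simplicial if its neighborhood is a clique. -/
def IsSimplicial (G : SimpleGraph V) (v : V) : Prop :=
  G.IsClique (G.neighborSet v)

/-- The simplicial component of a clique `C`: the simplicial vertices of `G` in `C`. -/
def Simp (G : SimpleGraph V) (C : Set V) : Set V :=
  {v ∈ C | IsSimplicial G v}

/-- The non-simplicial component of a clique `C`. -/
def Sep (G : SimpleGraph V) (C : Set V) : Set V :=
  C \ Simp G C

/-- `C` is a boundary clique (simply separated clique): a maximal clique such that
`Sep C = C ∩ C'` for some other maximal clique `C'`. -/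
def IsBoundaryClique (G : SimpleGraph V) (C : Set V) : Prop :=
  IsMaxClique G C ∧ ∃ C' : Set V, IsMaxClique G C' ∧ C' ≠ C ∧ Sep G C = C ∩ C'

/-- The induced subgraph on `W`, kept on the same vertex type. -/
def restrictS (G : SimpleGraph V) (W : Set V) : SimpleGraph V where
  Adj u v := G.Adj u v ∧ u ∈ W ∧ v ∈ W
  symm := ⟨fun u v ⟨h, hu, hv⟩ => ⟨h.symm, hv, hu⟩⟩
  loopless := ⟨fun u ⟨h, _, _⟩ => G.irrefl h⟩

/-- The vertex subset `A` induces a connected subgraph of `T`. -/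
def ConnOn {α : Type*} (T : SimpleGraph α) (A : Set α) : Prop :=
  A.Nonempty ∧ ∀ u ∈ A, ∀ v ∈ A, ∃ p : T.Walk u v, ∀ x ∈ p.support, x ∈ A

/-- The induced subgraph `G(W)` is complete. -/
def CompleteOn (G : SimpleGraph V) (W : Set V) : Prop :=
  ∀ u ∈ W, ∀ v ∈ W, u ≠ v → G.Adj u v

/-- A clique tree of `G`: a tree on the maximal cliques of `G` satisfying the
junction property. -/
def IsCliqueTree (G : SimpleGraph V) (T : SimpleGraph {s : Set V // IsMaxClique G s}) : Prop :=
  T.IsTree ∧ ∀ (C₁ C₂ : {s : Set V // IsMaxClique G s}) (p : T.Walk C₁ C₂), p.IsPath →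
    ∀ C₃ ∈ p.support, C₁.val ∩ C₂.val ⊆ C₃.val

/-- A leaf (endpoint) of a graph: a vertex with exactly one neighbor. -/
def IsLeaf {α : Type*} (T : SimpleGraph α) (a : α) : Prop :=
  ∃! b, T.Adj a b

/-- The union of the cliques preceding position `k` in a sequence. -/
def prefUnion {K : ℕ} (f : Fin K → Set V) (k : Fin K) : Set V :=
  {v | ∃ j, j < k ∧ v ∈ f j}

/-- A perfect sequence of the maximal cliques of the induced subgraph `G(W)`:
an enumeration of the maximal cliques of `G(W)` with the running intersection property. -/
def IsPerfectSeqOn (G : SimpleGraph V) (W : Set V) {K : ℕ} (f : Fin K → Set V) : Prop :=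
  Function.Injective f ∧ (∀ s : Set V, IsMaxCliqueOn G W s ↔ ∃ k, f k = s) ∧
  ∀ k : Fin K, 0 < (k : ℕ) →
    G.IsClique (prefUnion f k ∩ f k) ∧ ∃ k' : Fin K, k' < k ∧ prefUnion f k ∩ f k ⊆ f k'

/-- A perfect sequence of the maximal cliques of `G`. -/
def IsPerfectSeq (G : SimpleGraph V) {K : ℕ} (f : Fin K → Set V) : Prop :=
  Function.Injective f ∧ (∀ s : Set V, IsMaxClique G s ↔ ∃ k, f k = s) ∧
  ∀ k : Fin K, 0 < (k : ℕ) →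
    G.IsClique (prefUnion f k ∩ f k) ∧ ∃ k' : Fin K, k' < k ∧ prefUnion f k ∩ f k ⊆ f k'

/-- The closed neighborhood of a vertex. -/
def closedNbhd (G : SimpleGraph V) (v : V) : Set V :=
  insert v (G.neighborSet v)

/-!
A vertex of a maximal clique `C` is simplicial exactly when `C` is the only maximal clique
containing it, so `Sep C = C ∩ W` with `W` the union of the other maximal cliques. Those cliques
stay maximal in `G(W)`, and a maximal clique of `G(W)` that is not maximal in `G` lies in `C ∩ W`.
Hence the maximal cliques of `G(W)` are exactly the other ones iff `C ∩ W` lies in some other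
maximal clique `C'`, i.e. iff `Sep C = C ∩ C'`. Chordality is inherited by induced subgraphs.
-/

section Cliques

variable {V : Type*} {G : SimpleGraph V}

lemma exists_isMaxCliqueOn_superset [Finite V] {W s : Set V} (hsW : s ⊆ W) (hs : G.IsClique s) :
    ∃ t, IsMaxCliqueOn G W t ∧ s ⊆ t := by
  obtain ⟨t, hst, ht⟩ :=
    Finite.exists_le_maximal (p := fun t : Set V => t ⊆ W ∧ G.IsClique t) ⟨hsW, hs⟩
  exact ⟨t, ⟨ht.prop.1, ht.prop.2, fun t' ht'W ht' htt' =>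
    le_antisymm htt' (ht.le_of_ge ⟨ht'W, ht'⟩ htt')⟩, hst⟩

lemma exists_isMaxClique_superset [Finite V] {s : Set V} (hs : G.IsClique s) :
    ∃ t, IsMaxClique G t ∧ s ⊆ t := by
  obtain ⟨t, hst, ht⟩ := Finite.exists_le_maximal (p := G.IsClique) hs
  exact ⟨t, ⟨ht.prop, fun t' ht' htt' => le_antisymm htt' (ht.le_of_ge ht' htt')⟩, hst⟩

lemma IsMaxClique.isMaxCliqueOn {W s : Set V} (hs : IsMaxClique G s) (hsW : s ⊆ W) :
    IsMaxCliqueOn G W s :=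
  ⟨hsW, hs.1, fun t _ ht hst => hs.2 t ht hst⟩

lemma IsSimplicial.isClique_closedNbhd {v : V} (h : IsSimplicial G v) :
    G.IsClique (closedNbhd G v) :=
  SimpleGraph.isClique_insert.mpr ⟨h, fun _ hu _ => hu⟩

lemma IsMaxClique.eq_closedNbhd {C : Set V} (hC : IsMaxClique G C) {v : V} (hv : v ∈ C)
    (h : IsSimplicial G v) : C = closedNbhd G v := by
  refine hC.2 _ h.isClique_closedNbhd fun u hu => ?_
  rcases eq_or_ne u v with rfl | hne
  · exact Set.mem_insert _ _
  · exact Set.mem_insert_of_mem _ (hC.1 hv hu hne.symm)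

lemma IsMaxClique.isSimplicial_iff [Finite V] {C : Set V} (hC : IsMaxClique G C) {v : V}
    (hv : v ∈ C) : IsSimplicial G v ↔ ∀ s, IsMaxClique G s → v ∈ s → s = C := by
  refine ⟨fun h s hs hvs => (hs.eq_closedNbhd hvs h).trans (hC.eq_closedNbhd hv h).symm,
    fun h => ?_⟩
  by_contra hns
  obtain ⟨a, hva, b, hvb, hab, hnadj⟩ : ∃ a, G.Adj v a ∧ ∃ b, G.Adj v b ∧ a ≠ b ∧ ¬ G.Adj a b := by
    simpa [IsSimplicial, SimpleGraph.isClique_iff, Set.Pairwise] using hns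
  obtain ⟨u, hvu, huC⟩ : ∃ u, G.Adj v u ∧ u ∉ C := by
    by_cases haC : a ∈ C
    · exact ⟨b, hvb, fun hbC => hnadj (hC.1 haC hbC hab)⟩
    · exact ⟨a, hva, haC⟩
  obtain ⟨s, hs, hvus⟩ := exists_isMaxClique_superset (SimpleGraph.isClique_pair.mpr fun _ => hvu)
  exact huC (h s hs (hvus (Set.mem_insert _ _)) ▸ hvus (Set.mem_insert_of_mem _ rfl))

end Cliques

section Restrict

variable {V : Type*} {G : SimpleGraph V} {W : Set V}

lemma restrictS_le : restrictS G W ≤ G := fun _ _ h => h.1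

lemma mem_of_mem_support_restrictS {u v x : V} {p : (restrictS G W).Walk u v} (hp : ¬ p.Nil)
    (hx : x ∈ p.support) : x ∈ W := by
  obtain ⟨e, he, hxe⟩ := (SimpleGraph.Walk.mem_support_iff_exists_mem_edges_of_not_nil hp).1 hx
  induction e with
  | h a b =>
    obtain ⟨-, ha, hb⟩ := p.adj_of_mem_edges he
    rcases Sym2.mem_iff.1 hxe with rfl | rfl
    exacts [ha, hb]

lemma IsChordal.restrictS (hch : IsChordal G) (W : Set V) : IsChordal (restrictS G W) := by
  intro u c hc hlen
  obtain ⟨v, w, hv, hw, hvw, hnot⟩ := hch (c.mapLe restrictS_le)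
    ((SimpleGraph.Walk.isCycle_mapLe _).2 hc) (by rwa [SimpleGraph.Walk.length_mapLe])
  rw [SimpleGraph.Walk.support_mapLe_eq_support] at hv hw
  rw [SimpleGraph.Walk.edges_mapLe_eq_edges] at hnot
  have hc_nil : ¬ c.Nil := hc.not_nil
  exact ⟨v, w, hv, hw, ⟨hvw, mem_of_mem_support_restrictS hc_nil hv,
    mem_of_mem_support_restrictS hc_nil hw⟩, hnot⟩

end Restrict
section Boundary

variable {V : Type*} {G : SimpleGraph V} {C : Set V}

/-- The vertex set `V(C(G) \ {C})`. -/
def unionOtherMaxCliques (G : SimpleGraph V) (C : Set V) : Set V :=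
  {v | ∃ s : Set V, IsMaxClique G s ∧ s ≠ C ∧ v ∈ s}

lemma subset_unionOtherMaxCliques {s : Set V} (hs : IsMaxClique G s) (hsC : s ≠ C) :
    s ⊆ unionOtherMaxCliques G C :=
  fun _ hv => ⟨s, hs, hsC, hv⟩

lemma IsMaxClique.sep_eq_inter_unionOtherMaxCliques [Finite V] (hC : IsMaxClique G C) :
    Sep G C = C ∩ unionOtherMaxCliques G C := by
  ext v
  simp only [Sep, Simp, unionOtherMaxCliques, Set.mem_sdiff, Set.mem_inter_iff, Set.mem_ofPred_eq]
  refine and_congr_right fun hv => ?_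
  rw [and_iff_right hv, hC.isSimplicial_iff hv]
  push Not
  simp only [and_comm]

lemma IsMaxClique.isBoundaryClique_iff [Finite V] (hC : IsMaxClique G C) :
    IsBoundaryClique G C ↔
      ∃ C', IsMaxClique G C' ∧ C' ≠ C ∧ C ∩ unionOtherMaxCliques G C ⊆ C' := by
  rw [IsBoundaryClique, and_iff_right hC, hC.sep_eq_inter_unionOtherMaxCliques]
  refine exists_congr fun C' => and_congr_right fun hC' => and_congr_right fun hC'C => ?_
  refine ⟨fun h => h ▸ Set.inter_subset_right, fun h => ?_⟩
  exact subset_antisymm (Set.subset_inter Set.inter_subset_left h)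
    (Set.inter_subset_inter_right C (subset_unionOtherMaxCliques hC' hC'C))

lemma IsBoundaryClique.isMaxClique_of_isMaxCliqueOn [Finite V] (hB : IsBoundaryClique G C)
    {s : Set V} (hs : IsMaxCliqueOn G (unionOtherMaxCliques G C) s) : IsMaxClique G s := by
  obtain ⟨C', hC', hC'C, hsub⟩ := hB.1.isBoundaryClique_iff.1 hB
  obtain ⟨t, ht, hst⟩ := exists_isMaxClique_superset hs.2.1
  by_cases htC : t = C
  · have hsC' : s ⊆ C' := fun x hx => hsub ⟨htC ▸ hst hx, hs.1 hx⟩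
    rwa [hs.2.2 C' (subset_unionOtherMaxCliques hC' hC'C) hC'.1 hsC']
  · rwa [hs.2.2 t (subset_unionOtherMaxCliques ht htC) ht.1 hst]

lemma IsBoundaryClique.not_subset_unionOtherMaxCliques [Finite V] (hB : IsBoundaryClique G C) :
    ¬ C ⊆ unionOtherMaxCliques G C := by
  obtain ⟨C', hC', hC'C, hsub⟩ := hB.1.isBoundaryClique_iff.1 hB
  exact fun hCU => hC'C (hB.1.2 C' hC'.1 fun x hx => hsub ⟨hx, hCU hx⟩).symm

lemma IsBoundaryClique.isMaxCliqueOn_iff [Finite V] (hB : IsBoundaryClique G C) (s : Set V) :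
    IsMaxCliqueOn G (unionOtherMaxCliques G C) s ↔ IsMaxClique G s ∧ s ≠ C := by
  refine ⟨fun hs => ⟨hB.isMaxClique_of_isMaxCliqueOn hs, ?_⟩,
    fun ⟨hs, hsC⟩ => hs.isMaxCliqueOn (subset_unionOtherMaxCliques hs hsC)⟩
  rintro rfl
  exact hB.not_subset_unionOtherMaxCliques hs.1

lemma IsMaxClique.isBoundaryClique_of_isMaxCliqueOn [Finite V] (hC : IsMaxClique G C)
    (h : ∀ s, IsMaxCliqueOn G (unionOtherMaxCliques G C) s → IsMaxClique G s ∧ s ≠ C) :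
    IsBoundaryClique G C := by
  obtain ⟨t, ht, hsub⟩ :=
    exists_isMaxCliqueOn_superset Set.inter_subset_right (hC.1.subset Set.inter_subset_left)
  obtain ⟨htmax, htC⟩ := h t ht
  exact hC.isBoundaryClique_iff.2 ⟨t, htmax, htC, hsub⟩

end Boundary

theorem boundary_iff_removal_chordal_with_cliques_general {V : Type*} [Fintype V]
    (G : SimpleGraph V) (hch : IsChordal G) (C : Set V) (hC : IsMaxClique G C)
    (W : Set V) (hW : W = {v | ∃ s : Set V, IsMaxClique G s ∧ s ≠ C ∧ v ∈ s}) :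
    IsBoundaryClique G C ↔
      (IsChordal (restrictS G W) ∧
        ∀ s : Set V, IsMaxCliqueOn G W s ↔ (IsMaxClique G s ∧ s ≠ C)) := by
  subst hW
  exact ⟨fun hB => ⟨hch.restrictS _, hB.isMaxCliqueOn_iff⟩,
    fun ⟨_, h⟩ => hC.isBoundaryClique_of_isMaxCliqueOn fun s => (h s).1⟩

theorem boundary_iff_removal_chordal_with_cliques {V : Type*} [Fintype V]
    (G : SimpleGraph V) (hconn : G.Connected) (hch : IsChordal G)
    (hnc : ¬ CompleteOn G Set.univ) (C : Set V) (hC : IsMaxClique G C)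
    (W : Set V) (hW : W = {v | ∃ s : Set V, IsMaxClique G s ∧ s ≠ C ∧ v ∈ s}) :
    IsBoundaryClique G C ↔
      (IsChordal (restrictS G W) ∧
        ∀ s : Set V, IsMaxCliqueOn G W s ↔ (IsMaxClique G s ∧ s ≠ C)) :=
  boundary_iff_removal_chordal_with_cliques_general G hch C hC W hW

end Chordal
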